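/- For every integer n ≥ 3 and all real numbers y_1, …, y_{n−1}, L_n(y_1, …, y_{n−1}, 0) = (n − 3 + ∑_{i=1}^{n−1} y_i) · L_{n−1}(y_1, …, y_{n−1}), where L_m(y) := ∑_{T ∈ T_m} ∏_{i=1}^m [y_i(y_i+1)⋯(y_i+d_T(i)−2)] (each factor being the ascending factorial of y_i with d_T(i)−1 factors, equal to 1 when d_T(i) = 1). -/

import Mathlib

open scoped Classical

/-- The degree of vertex `i` in the simple graph `G`. -/
noncomputable def treeDeg {n : ℕ} (G : SimpleGraph (Fin n)) (i : Fin n) : ℕ :=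
  Nat.card (G.neighborSet i)

/-- The finite set of vertex-labeled trees on `{0, …, n-1}`: simple graphs on `Fin n`
that are connected and acyclic. -/
noncomputable def treeFinset (n : ℕ) : Finset (SimpleGraph (Fin n)) :=
  Finset.univ.filter (fun G => G.IsTree)

/-- The ascending factorial `x (x+1) ⋯ (x+m-1)` with `m` factors (equal to `1` when `m = 0`). -/
noncomputable def ascFac (x : ℝ) (m : ℕ) : ℝ :=
  ∏ j ∈ Finset.range m, (x + j)

/-- `L_m(y) := ∑_{T ∈ T_m} ∏_i y_i (y_i+1) ⋯ (y_i + d_T(i) - 2)`, each factor being the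
ascending factorial of `y_i` with `d_T(i) - 1` factors. -/
noncomputable def Lpoly (m : ℕ) (y : Fin m → ℝ) : ℝ :=
  ∑ T ∈ treeFinset m, ∏ i, ascFac (y i) (treeDeg T i - 1)

open SimpleGraph Finset

section Aux
variable {m : ℕ}

/-- attach a leaf at vertex `j`. -/
def att (T : SimpleGraph (Fin m)) (j : Fin m) : SimpleGraph (Fin (m+1)) :=
  T.map Fin.castSuccEmb ⊔ SimpleGraph.edge j.castSucc (Fin.last m)

/-- restrict to the first `m` vertices. -/
def res (T' : SimpleGraph (Fin (m+1))) : SimpleGraph (Fin m) :=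
  T'.comap (Fin.castSuccEmb : Fin m ↪ Fin (m+1))

/-- the pullback hom. -/
def resHom (T' : SimpleGraph (Fin (m+1))) : res T' →g T' :=
  ⟨Fin.castSuccEmb, fun h => h⟩

lemma att_adj {T : SimpleGraph (Fin m)} {j : Fin m} {u v : Fin (m+1)} :
    (att T j).Adj u v ↔ (∃ a b, T.Adj a b ∧ a.castSucc = u ∧ b.castSucc = v) ∨
      ((u = j.castSucc ∧ v = Fin.last m) ∨ (u = Fin.last m ∧ v = j.castSucc)) := by
  have hne : (j.castSucc : Fin (m+1)) ≠ Fin.last m := Fin.castSucc_lt_last j |>.ne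
  constructor
  · rintro (h | h)
    · exact Or.inl ((map_adj Fin.castSuccEmb T u v).mp h)
    · rw [edge_adj] at h
      exact Or.inr h.1
  · rintro (⟨a, b, h, rfl, rfl⟩ | h)
    · exact Or.inl ((map_adj Fin.castSuccEmb T _ _).mpr ⟨a, b, h, rfl, rfl⟩)
    · refine Or.inr ?_
      rw [edge_adj]
      rcases h with ⟨rfl, rfl⟩ | ⟨rfl, rfl⟩
      · exact ⟨Or.inl ⟨rfl, rfl⟩, hne⟩
      · exact ⟨Or.inr ⟨rfl, rfl⟩, hne.symm⟩

lemma res_att (T : SimpleGraph (Fin m)) (j : Fin m) : res (att T j) = T := by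
  ext a b
  simp only [res, comap_adj, att_adj, Fin.coe_castSuccEmb]
  constructor
  · rintro (⟨a', b', h, ha, hb⟩ | (⟨h, h2⟩ | ⟨h, h2⟩))
    · rwa [Fin.castSucc_inj.mp ha, Fin.castSucc_inj.mp hb] at h
    · exact absurd h2 (Fin.castSucc_lt_last b).ne
    · exact absurd h (Fin.castSucc_lt_last a).ne
  · intro h; exact Or.inl ⟨a, b, h, rfl, rfl⟩
end Aux

section Aux2
variable {m : ℕ} {T : SimpleGraph (Fin m)} {j : Fin m}

lemma att_nbhd_last : (att T j).neighborSet (Fin.last m) = {j.castSucc} := by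
  ext v
  simp only [SimpleGraph.mem_neighborSet, att_adj, Set.mem_singleton_iff]
  constructor
  · rintro (⟨a, b, h, ha, hb⟩ | (⟨h, h2⟩ | ⟨h, rfl⟩))
    · exact absurd ha.symm (Fin.castSucc_lt_last a).ne'
    · exact absurd h (Fin.castSucc_lt_last j).ne'
    · rfl
  · rintro rfl; tauto

lemma att_nbhd_castSucc (i : Fin m) :
    (att T j).neighborSet i.castSucc =
      if i = j then insert (Fin.last m) (Fin.castSucc '' T.neighborSet i)
      else Fin.castSucc '' T.neighborSet i := by
  ext v
  simp only [SimpleGraph.mem_neighborSet, att_adj]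
  split_ifs with hij
  · subst hij
    constructor
    · rintro (⟨a, b, h, ha, hb⟩ | (⟨h, rfl⟩ | ⟨h, h2⟩))
      · rw [Fin.castSucc_inj.mp ha] at h
        exact Or.inr ⟨b, h, hb⟩
      · exact Or.inl rfl
      · exact absurd h (Fin.castSucc_lt_last i).ne
    · rintro (rfl | ⟨b, h, rfl⟩)
      · exact Or.inr (Or.inl ⟨rfl, rfl⟩)
      · exact Or.inl ⟨i, b, h, rfl, rfl⟩
  · constructor
    · rintro (⟨a, b, h, ha, hb⟩ | (⟨h, rfl⟩ | ⟨h, h2⟩))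
      · rw [Fin.castSucc_inj.mp ha] at h
        exact ⟨b, h, hb⟩
      · exact absurd (Fin.castSucc_inj.mp h) hij
      · exact absurd h (Fin.castSucc_lt_last i).ne
    · rintro ⟨b, h, rfl⟩
      exact Or.inl ⟨i, b, h, rfl, rfl⟩

lemma treeDeg_att_last : treeDeg (att T j) (Fin.last m) = 1 := by
  rw [treeDeg, Nat.card_coe_set_eq, att_nbhd_last, Set.ncard_singleton]

lemma treeDeg_att_castSucc (i : Fin m) :
    treeDeg (att T j) i.castSucc = treeDeg T i + if i = j then 1 else 0 := by
  rw [treeDeg, treeDeg, Nat.card_coe_set_eq, Nat.card_coe_set_eq, att_nbhd_castSucc]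
  have himg : (Fin.castSucc '' T.neighborSet i).ncard = (T.neighborSet i).ncard :=
    Set.ncard_image_of_injective _ (Fin.castSucc_injective m)
  split_ifs with hij
  · rw [Set.ncard_insert_of_notMem ?_ (Set.toFinite _), himg]
    rintro ⟨b, _, hb⟩
    exact (Fin.castSucc_lt_last b).ne hb
  · rw [himg, Nat.add_zero]

lemma treeDeg_pos {n : ℕ} {G : SimpleGraph (Fin n)} (hc : G.Connected) (hn : 2 ≤ n)
    (v : Fin n) : 1 ≤ treeDeg G v := by
  have : 1 < Fintype.card (Fin n) := by simp; omega
  obtain ⟨u, hu⟩ := Fintype.exists_ne_of_one_lt_card this v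
  obtain ⟨w⟩ := hc.preconnected v u
  cases w with
  | nil => exact absurd rfl hu
  | cons h p =>
    have : (G.neighborSet v).Nonempty := ⟨_, h⟩
    rw [treeDeg, Nat.card_coe_set_eq]
    exact Set.ncard_pos (Set.toFinite _) |>.mpr this
end Aux2

section Walks
open SimpleGraph.Walk
variable {V W : Type*} {G' : SimpleGraph W}

/-- Pull a walk back along an injective map, provided its support lies in the range. -/
lemma pull_walk (f : V ↪ W) {u' v' : W} (w : G'.Walk u' v')
    (hs : ∀ x ∈ w.support, ∃ y, f y = x) :
    ∃ (a b : V) (h1 : u' = f a) (h2 : v' = f b) (w0 : (G'.comap f).Walk a b),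
      w0.map ⟨f, fun h => h⟩ = w.copy h1 h2 := by
  induction w with
  | nil =>
    rename_i u'
    obtain ⟨a, ha⟩ := hs u' (by simp)
    subst ha
    exact ⟨a, a, rfl, rfl, Walk.nil, by simp⟩
  | cons h p ih =>
    rename_i u' x v'
    obtain ⟨a, ha⟩ := hs u' (by simp)
    obtain ⟨b, c, h1, h2, w0, hmap⟩ := ih (fun z hz => hs z (by simp [hz]))
    subst ha h1 h2
    have hadj : (G'.comap f).Adj a b := h
    refine ⟨a, c, rfl, rfl, Walk.cons hadj w0, ?_⟩
    simp only [Walk.copy_rfl_rfl] at hmap ⊢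
    rw [Walk.map_cons, hmap]

/-- No cycle passes through a vertex with a unique neighbor. -/
lemma no_cycle_leaf {L x0 : W} (hL : ∀ z, G'.Adj L z → z = x0) {v : W}
    (c : G'.Walk v v) (hc : c.IsCycle) : L ∉ c.support := by
  intro hmem
  have hc' := hc.rotate hmem
  set c' := c.rotate _ hmem with hc'def
  clear_value c'
  cases c' with
  | nil => exact hc'.not_of_nil
  | cons h p =>
    rename_i z
    have hz0 : z = x0 := hL z h
    rw [Walk.cons_isCycle_iff] at hc'
    have hne : L ≠ z := h.ne
    have hnn : ¬ p.reverse.Nil := by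
      rw [Walk.nil_iff_length_eq, Walk.length_reverse]
      intro hlen
      exact hne (Walk.eq_of_length_eq_zero hlen).symm
    obtain ⟨z2, h2, q, hq⟩ := Walk.not_nil_iff.mp hnn
    have hz2 : z2 = x0 := hL z2 h2
    have hmm : s(L, z2) ∈ p.reverse.edges := by rw [hq]; simp
    rw [Walk.edges_reverse, List.mem_reverse, hz2, ← hz0] at hmm
    exact hc'.2 hmm

/-- A path between two non-leaf vertices avoids the leaf. -/
lemma path_avoids_leaf {L x0 : W} (hL : ∀ z, G'.Adj L z → z = x0) :
    ∀ {u v : W} (p : G'.Walk u v), p.IsPath → u ≠ L → v ≠ L → L ∉ p.support := by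
  intro u v p
  induction p with
  | nil => intro _ hu _; simpa using fun h => (hu h.symm)
  | cons h q ih =>
    rename_i u z v
    intro hp hu hv
    rw [Walk.support_cons, List.mem_cons]
    rintro (rfl | hLq)
    · exact hu rfl
    by_cases hz : z = L
    · subst hz
      cases q with
      | nil => exact hv rfl
      | cons h2 q2 =>
        rename_i z2
        have hz2 : z2 = x0 := hL z2 h2
        have hu0 : u = z2 := (hL u h.symm).trans hz2.symm
        rw [Walk.cons_isPath_iff] at hp
        refine hp.2 ?_
        rw [Walk.support_cons]
        refine List.mem_cons_of_mem _ ?_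
        rw [hu0]
        exact q2.start_mem_support
    · exact ih hp.of_cons hz hv hLq
end Walks

section Trees
variable {m : ℕ} {T : SimpleGraph (Fin m)} {j : Fin m} {T' : SimpleGraph (Fin (m+1))}

def attHom (T : SimpleGraph (Fin m)) (j : Fin m) : T →g att T j :=
  ⟨Fin.castSucc, fun {a b} h => att_adj.mpr (Or.inl ⟨a, b, h, rfl, rfl⟩)⟩

lemma att_hL : ∀ z, (att T j).Adj (Fin.last m) z → z = j.castSucc := by
  intro z hz
  have : z ∈ (att T j).neighborSet (Fin.last m) := hz
  rwa [att_nbhd_last, Set.mem_singleton_iff] at this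

lemma att_isTree (hT : T.IsTree) : (att T j).IsTree := by
  constructor
  · rw [connected_iff]
    refine ⟨fun u v => ?_, ⟨0⟩⟩
    have key : ∀ u : Fin (m+1), (att T j).Reachable u j.castSucc := by
      intro u
      refine Fin.lastCases ?_ ?_ u
      · exact (att_adj.mpr (Or.inr (Or.inr ⟨rfl, rfl⟩))).reachable
      · intro a
        obtain ⟨w⟩ := hT.isConnected.preconnected a j
        exact ⟨w.map (attHom T j)⟩
    exact (key u).trans (key v).symm
  · intro v c hc
    have hnot := no_cycle_leaf att_hL c hc
    have hs : ∀ x ∈ c.support, ∃ y : Fin m, Fin.castSuccEmb y = x := by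
      intro x hx
      have hxL : x ≠ Fin.last m := fun h => hnot (h ▸ hx)
      obtain ⟨y, hy⟩ := Fin.eq_castSucc_of_ne_last hxL
      exact ⟨y, hy⟩
    obtain ⟨a, b, h1, h2, w0, hmap⟩ := pull_walk Fin.castSuccEmb c hs
    obtain rfl : a = b := Fin.castSucc_injective m (h1.symm.trans h2)
    have hw0 : w0.IsCycle := by
      have hcc : (c.copy h1 h2).IsCycle := (Walk.isCycle_copy c h1).mpr hc
      rw [← hmap] at hcc
      exact (Walk.map_isCycle_iff_of_injective (p := w0)
        (fun _ _ hh => Fin.castSucc_injective m hh)).mp hcc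
    have hac : ((att T j).comap (Fin.castSuccEmb : Fin m ↪ Fin (m+1))).IsAcyclic := by
      have hG : ((att T j).comap (Fin.castSuccEmb : Fin m ↪ Fin (m+1))) = T := res_att T j
      rw [hG]
      exact hT.IsAcyclic
    exact hac w0 hw0

lemma deg_one_nbr (hdeg : treeDeg T' (Fin.last m) = 1) :
    ∃ j0 : Fin m, T'.neighborSet (Fin.last m) = {j0.castSucc} := by
  rw [treeDeg, Nat.card_coe_set_eq, Set.ncard_eq_one] at hdeg
  obtain ⟨x0, hx0⟩ := hdeg
  have hadj : T'.Adj (Fin.last m) x0 := by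
    have : x0 ∈ T'.neighborSet (Fin.last m) := by rw [hx0]; rfl
    exact this
  obtain ⟨j0, hj0⟩ := Fin.eq_castSucc_of_ne_last hadj.ne'
  exact ⟨j0, by rw [hx0, hj0]⟩

lemma nbr_hL {j0 : Fin m} (hx0 : T'.neighborSet (Fin.last m) = {j0.castSucc}) :
    ∀ z, T'.Adj (Fin.last m) z → z = j0.castSucc := by
  intro z hz
  have : z ∈ T'.neighborSet (Fin.last m) := hz
  rwa [hx0, Set.mem_singleton_iff] at this

lemma res_isTree (hT' : T'.IsTree) {j0 : Fin m}
    (hx0 : T'.neighborSet (Fin.last m) = {j0.castSucc}) (hm : 1 ≤ m) :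
    (res T').IsTree := by
  have hL := nbr_hL hx0
  constructor
  · rw [connected_iff]
    refine ⟨fun a b => ?_, ⟨⟨0, hm⟩⟩⟩
    obtain ⟨p, hp, -⟩ := hT'.existsUnique_path a.castSucc b.castSucc
    have hnot : Fin.last m ∉ p.support :=
      path_avoids_leaf hL p hp (Fin.castSucc_lt_last a).ne (Fin.castSucc_lt_last b).ne
    have hs : ∀ x ∈ p.support, ∃ y : Fin m, Fin.castSuccEmb y = x := by
      intro x hx
      have hxL : x ≠ Fin.last m := fun h => hnot (h ▸ hx)
      obtain ⟨y, hy⟩ := Fin.eq_castSucc_of_ne_last hxL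
      exact ⟨y, hy⟩
    obtain ⟨a', b', h1, h2, w0, -⟩ := pull_walk Fin.castSuccEmb p hs
    obtain rfl : a = a' := Fin.castSucc_injective m h1
    obtain rfl : b = b' := Fin.castSucc_injective m h2
    exact ⟨w0⟩
  · intro v c hc
    have : (c.map (resHom T')).IsCycle :=
      (Walk.map_isCycle_iff_of_injective (p := c) (f := resHom T')
        (fun _ _ hh => Fin.castSucc_injective m hh)).mpr hc
    exact hT'.IsAcyclic _ this

lemma att_res {j0 : Fin m} (hx0 : T'.neighborSet (Fin.last m) = {j0.castSucc}) :
    att (res T') j0 = T' := by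
  have hL := nbr_hL hx0
  have hadj : T'.Adj (Fin.last m) j0.castSucc := by
    have : j0.castSucc ∈ T'.neighborSet (Fin.last m) := by rw [hx0]; rfl
    exact this
  ext u v
  rw [att_adj]
  constructor
  · rintro (⟨a, b, h, rfl, rfl⟩ | (⟨rfl, rfl⟩ | ⟨rfl, rfl⟩))
    · exact h
    · exact hadj.symm
    · exact hadj
  · intro h
    by_cases hu : u = Fin.last m
    · subst hu
      exact Or.inr (Or.inr ⟨rfl, hL v h⟩)
    · by_cases hv : v = Fin.last m
      · subst hv
        exact Or.inr (Or.inl ⟨hL u h.symm, rfl⟩)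
      · obtain ⟨a, rfl⟩ := Fin.eq_castSucc_of_ne_last hu
        obtain ⟨b, rfl⟩ := Fin.eq_castSucc_of_ne_last hv
        exact Or.inl ⟨a, b, h, rfl, rfl⟩
end Trees

section Helpers

lemma ascFac_zero_of_pos {k : ℕ} (hk : 1 ≤ k) : ascFac 0 k = 0 := by
  apply Finset.prod_eq_zero (Finset.mem_range.mpr hk)
  norm_num

lemma ascFac_of_pos {x : ℝ} {d : ℕ} (hd : 1 ≤ d) :
    ascFac x d = ascFac x (d - 1) * (x + ((d : ℝ) - 1)) := by
  obtain ⟨k, rfl⟩ : ∃ k, d = k + 1 := ⟨d - 1, by omega⟩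
  simp [ascFac, Finset.prod_range_succ]

lemma treeDeg_eq_degree {n : ℕ} (G : SimpleGraph (Fin n)) (i : Fin n) :
    treeDeg G i = G.degree i := by
  rw [treeDeg, Nat.card_eq_fintype_card, SimpleGraph.card_neighborSet_eq_degree]

lemma sum_treeDeg {n : ℕ} {G : SimpleGraph (Fin n)} (hG : G.IsTree) :
    ∑ i, treeDeg G i = 2 * (n - 1) := by
  have hcard := hG.card_edgeFinset
  rw [Fintype.card_fin] at hcard
  calc ∑ i, treeDeg G i = ∑ i, G.degree i := by
        exact Finset.sum_congr rfl fun i _ => treeDeg_eq_degree G i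
  _ = 2 * G.edgeFinset.card := G.sum_degrees_eq_twice_card_edges
  _ = 2 * (n - 1) := by omega
end Helpers


/-- The inductive step: for `n = m + 1 ≥ 3`,
`L_n(y_1, …, y_{n-1}, 0) = (n - 3 + ∑_{i=1}^{n-1} y_i) ⬝ L_{n-1}(y_1, …, y_{n-1})`. -/
theorem Lpoly_restrict (m : ℕ) (hm : 3 ≤ m + 1) (y : Fin m → ℝ) :
    Lpoly (m + 1) (Fin.snoc y 0) =
      (((m : ℝ) + 1) - 3 + ∑ i, y i) * Lpoly m y := by
  have hm2 : 2 ≤ m := by omega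
  set L : Fin (m + 1) := Fin.last m with hLdef
  set f : SimpleGraph (Fin (m + 1)) → ℝ :=
    fun T' => ∏ i, ascFac ((Fin.snoc y 0 : Fin (m+1) → ℝ) i) (treeDeg T' i - 1) with hfdef
  -- Step A: restrict the sum to trees where the last vertex is a leaf
  have stepA : Lpoly (m + 1) (Fin.snoc y 0) =
      ∑ T' ∈ (treeFinset (m + 1)).filter (fun T' => treeDeg T' L = 1), f T' := by
    rw [Lpoly]
    refine (Finset.sum_filter_of_ne ?_).symm
    intro T' hT' hne
    by_contra hdeg
    have hdeg' : treeDeg T' L ≠ 1 := fun h => hdeg h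
    apply hne
    have htree : T'.IsTree := by simpa [treeFinset] using hT'
    have h1 : 1 ≤ treeDeg T' L := treeDeg_pos htree.isConnected (by omega) L
    refine Finset.prod_eq_zero (Finset.mem_univ L) ?_
    rw [hLdef, Fin.snoc_last]
    exact ascFac_zero_of_pos (by rw [← hLdef]; omega)

  -- the choice of the neighbor of the leaf
  have hnbr_ex : ∀ T' ∈ (treeFinset (m + 1)).filter (fun T' => treeDeg T' L = 1),
      ∃ j0 : Fin m, T'.neighborSet (Fin.last m) = {j0.castSucc} := by
    intro T' hT'
    exact deg_one_nbr (Finset.mem_filter.mp hT').2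
  classical
  set nbr : SimpleGraph (Fin (m + 1)) → Fin m := fun T' =>
    if h : ∃ j0 : Fin m, T'.neighborSet (Fin.last m) = {j0.castSucc} then h.choose
    else ⟨0, by omega⟩ with hnbrdef
  have hnbr_spec : ∀ T', (∃ j0 : Fin m, T'.neighborSet (Fin.last m) = {j0.castSucc}) →
      T'.neighborSet (Fin.last m) = {(nbr T').castSucc} := by
    intro T' h
    rw [hnbrdef]
    simp only [dif_pos h]
    exact h.choose_spec
  -- Step B: the bijection (T, j) ↦ att T j
  have stepB : ∑ p ∈ (treeFinset m) ×ˢ (Finset.univ : Finset (Fin m)),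
      (y p.2 + ((treeDeg p.1 p.2 : ℝ) - 1)) * ∏ i, ascFac (y i) (treeDeg p.1 i - 1) =
      ∑ T' ∈ (treeFinset (m + 1)).filter (fun T' => treeDeg T' L = 1), f T' := by
    refine Finset.sum_nbij' (fun p => att p.1 p.2) (fun T' => (res T', nbr T'))
      ?_ ?_ ?_ ?_ ?_
    · rintro ⟨T, j⟩ hp
      have hT : T.IsTree := by
        simpa [treeFinset] using (Finset.mem_product.mp hp).1
      rw [Finset.mem_filter]
      refine ⟨by simpa [treeFinset] using att_isTree hT, ?_⟩
      rw [hLdef]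
      exact treeDeg_att_last
    · intro T' hT'
      have htree : T'.IsTree := by
        simpa [treeFinset] using (Finset.mem_filter.mp hT').1
      have hx0 := hnbr_spec T' (hnbr_ex T' hT')
      rw [Finset.mem_product]
      exact ⟨by simpa [treeFinset] using res_isTree htree hx0 (by omega), Finset.mem_univ _⟩
    · rintro ⟨T, j⟩ hp
      have hj : nbr (att T j) = j := by
        have hex : ∃ j0 : Fin m, (att T j).neighborSet (Fin.last m) = {j0.castSucc} :=
          ⟨j, att_nbhd_last⟩
        have := hnbr_spec (att T j) hex
        rw [att_nbhd_last] at this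
        have := Set.singleton_eq_singleton_iff.mp this
        exact (Fin.castSucc_injective m this.symm)
      rw [Prod.ext_iff]
      exact ⟨by simpa using res_att T j, hj⟩
    · intro T' hT'
      have hx0 := hnbr_spec T' (hnbr_ex T' hT')
      exact att_res hx0
    · rintro ⟨T, j⟩ hp
      have hT : T.IsTree := by
        simpa [treeFinset] using (Finset.mem_product.mp hp).1
      have hdj : 1 ≤ treeDeg T j := treeDeg_pos hT.isConnected hm2 j
      rw [hfdef]
      simp only
      rw [Fin.prod_univ_castSucc]
      have hlast : ascFac ((Fin.snoc y 0 : Fin (m+1) → ℝ) (Fin.last m)) (treeDeg (att T j) (Fin.last m) - 1)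
          = 1 := by
        rw [treeDeg_att_last, Fin.snoc_last]
        simp [ascFac]
      rw [hlast, mul_one]
      have hstep : ∀ i : Fin m,
          ascFac ((Fin.snoc y 0 : Fin (m+1) → ℝ) i.castSucc) (treeDeg (att T j) i.castSucc - 1) =
          ascFac (y i) (treeDeg T i + (if i = j then 1 else 0) - 1) := by
        intro i
        rw [Fin.snoc_castSucc, treeDeg_att_castSucc]
      rw [Finset.prod_congr rfl (fun i _ => hstep i)]
      have herase : ∀ i ∈ Finset.univ.erase j,
          ascFac (y i) (treeDeg T i + (if i = j then 1 else 0) - 1) =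
          ascFac (y i) (treeDeg T i - 1) := by
        intro i hi
        rw [if_neg (Finset.mem_erase.mp hi).1]
        norm_num
      rw [← Finset.mul_prod_erase Finset.univ
          (fun i => ascFac (y i) (treeDeg T i + (if i = j then 1 else 0) - 1))
          (Finset.mem_univ j),
        Finset.prod_congr rfl herase]
      have hplus : treeDeg T j + (if j = j then 1 else 0) - 1 = treeDeg T j := by
        rw [if_pos rfl]
        omega
      rw [hplus, ascFac_of_pos hdj,
        ← Finset.mul_prod_erase Finset.univ
          (fun i => ascFac (y i) (treeDeg T i - 1)) (Finset.mem_univ j)]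
      ring
  -- Step C: summing the coefficient
  rw [stepA, ← stepB, Finset.sum_product]
  dsimp only
  rw [Lpoly, Finset.mul_sum]
  refine Finset.sum_congr rfl ?_
  intro T hT
  have hT' : T.IsTree := by simpa [treeFinset] using hT
  have hdegsum : ∑ i, treeDeg T i = 2 * (m - 1) := sum_treeDeg hT'
  have hdegsumR : ∑ i, (treeDeg T i : ℝ) = 2 * (m : ℝ) - 2 := by
    rw [← Nat.cast_sum, hdegsum]
    push_cast [Nat.cast_sub (by omega : 1 ≤ m)]
    ring
  rw [← Finset.sum_mul]
  congr 1
  rw [Finset.sum_add_distrib, Finset.sum_sub_distrib, hdegsumR, Finset.sum_const,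
    Finset.card_univ, Fintype.card_fin]
  ring
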